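/- arXiv:0707.0376 — 4 statements merged into one kernel-verified Lean document; each statement's English description precedes it below -/
import Mathlib

section
/- Assume Ω satisfies the p-Sobolev–Poincaré inequality with constant C₀ for some p with 1 ≤ p ≤ n/(n−1). Then there is a constant C depending only on p and C₀ such that for every f ∈ W(Ω), every median r_f of f, and all 0 < t₁ < t₂, one has (t₂ − t₁) · |{x ∈ Ω : |f(x) − r_f| ≥ t₂}|^{1/p} ≤ C ∫_{{x ∈ Ω : t₁ < |f(x) − r_f| ≤ t₂}} |∇f(x)| dx. -/
/-!
Write `u = f - r`. For `t₁ < t < t₂` the truncation `g = max t (min t₂ u)` is again admissible,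
equals `t` on `{u ≤ 0}`, a set of measure at least `1/2` since `r` is a median, and equals `t₂` on
`{u ≥ t₂}`; by Rademacher's theorem and local constancy, `|∇g| ≤ |∇u|` on `{t ≤ u ≤ t₂}` and
`∇g = 0` elsewhere. Markov's inequality bounds the mean of `g` by `(t + t₂)/2`, so `g` deviates
from its mean by at least `(t₂ - t)/2` on `{u ≥ t₂}`, and the Sobolev–Poincaré inequality for `g`
yields `(t₂ - t) |{u ≥ t₂}|^{1/p} ≤ 2 C₀ ∫_{t₁ < u ≤ t₂} |∇f|`. Let `t → t₁`, and add the same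
estimate for `-u`, using that `s ↦ s^{1/p}` is subadditive for `p ≥ 1`.
-/

open MeasureTheory Set
open scoped ENNReal NNReal

noncomputable section

/-- The decreasing rearrangement of `u` with respect to the measure `μ`:
`u*(t) = inf { λ ≥ 0 : μ{|u| > λ} ≤ t }`. -/
def decRearr {α : Type*} [MeasurableSpace α] (μ : Measure α) (u : α → ℝ) (t : ℝ) : ℝ :=
  sInf {l : ℝ | 0 ≤ l ∧ μ {x | l < |u x|} ≤ ENNReal.ofReal t}

/-- `u**(t) = (1/t) ∫₀ᵗ u*(s) ds`. -/
def decRearrAvg {α : Type*} [MeasurableSpace α] (μ : Measure α) (u : α → ℝ) (t : ℝ) : ℝ :=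
  (1 / t) * ∫ s in Ioc (0 : ℝ) t, decRearr μ u s

abbrev Euc (n : ℕ) := EuclideanSpace ℝ (Fin n)

/-- `|∇f|(x)`, using the a.e. defined differential (Rademacher's theorem for
locally Lipschitz functions). -/
def gradNorm {n : ℕ} (f : Euc n → ℝ) (x : Euc n) : ℝ := ‖fderiv ℝ f x‖

/-- The admissible class `W(Ω)`: locally Lipschitz on `Ω`, with `f` and `|∇f|`
integrable on `Ω`. -/
def MemW {n : ℕ} (Ω : Set (Euc n)) (f : Euc n → ℝ) : Prop :=
  (∀ x ∈ Ω, ∃ s ∈ nhds x, ∃ K : ℝ≥0, LipschitzOnWith K f s) ∧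
    IntegrableOn f Ω ∧ IntegrableOn (gradNorm f) Ω

/-- `Ω` satisfies the `p`-Sobolev–Poincaré inequality with constant `C₀`. -/
def SPIneq {n : ℕ} (Ω : Set (Euc n)) (p C₀ : ℝ) : Prop :=
  ∀ f : Euc n → ℝ, MemW Ω f →
    (∫ x in Ω, |f x - ∫ y in Ω, f y| ^ p) ^ (1 / p) ≤ C₀ * ∫ x in Ω, gradNorm f x

/-- `r` is a median of `f` on `Ω` (with `|Ω| = 1`). -/
def IsMedian {n : ℕ} (Ω : Set (Euc n)) (f : Euc n → ℝ) (r : ℝ) : Prop :=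
  1 / 2 ≤ volume {x ∈ Ω | r ≤ f x} ∧ 1 / 2 ≤ volume {x ∈ Ω | f x ≤ r}

open Filter Topology

theorem ContinuousOn.measurableSet_inter_preimage {α γ : Type*} [TopologicalSpace α]
    [MeasurableSpace α] [OpensMeasurableSpace α] [TopologicalSpace γ] [MeasurableSpace γ]
    [BorelSpace γ] {f : α → γ} {s : Set α} {t : Set γ} (hf : ContinuousOn f s)
    (hs : MeasurableSet s) (ht : MeasurableSet t) : MeasurableSet (s ∩ f ⁻¹' t) :=
  Subtype.image_preimage_coe s (f ⁻¹' t) ▸ hs.subtype_image (hf.domRestrict.measurable ht)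

theorem le_of_forall_Ioo_sub_mul_le {t₁ t₂ K M : ℝ} (h : t₁ < t₂)
    (H : ∀ t ∈ Ioo t₁ t₂, (t₂ - t) * K ≤ M) : (t₂ - t₁) * K ≤ M := by
  have hlim : Tendsto (fun t => (t₂ - t) * K) (𝓝[>] t₁) (𝓝 ((t₂ - t₁) * K)) :=
    (((continuous_const.sub continuous_id).mul continuous_const).tendsto t₁).mono_left
      nhdsWithin_le_nhds
  exact le_of_tendsto hlim (eventually_of_mem (Ioo_mem_nhdsGT h) H)

theorem ae_differentiableAt_of_forall_lipschitzOnWith_nhds {E F : Type*}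
    [NormedAddCommGroup E] [NormedSpace ℝ E] [FiniteDimensional ℝ E] [MeasurableSpace E]
    [BorelSpace E] {μ : Measure E} [μ.IsAddHaarMeasure] [NormedAddCommGroup F]
    [NormedSpace ℝ F] [FiniteDimensional ℝ F] {f : E → F} {Ω : Set E}
    (hf : ∀ x ∈ Ω, ∃ s ∈ 𝓝 x, ∃ K : ℝ≥0, LipschitzOnWith K f s) :
    ∀ᵐ x ∂μ, x ∈ Ω → DifferentiableAt ℝ f x := by
  choose! s hs K hK using hf
  obtain ⟨T, hTΩ, hTc, hTU⟩ := TopologicalSpace.isOpen_biUnion_countable Ω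
    (fun x => interior (s x)) fun _ _ => isOpen_interior
  have hT : ∀ᵐ x ∂μ, ∀ i ∈ T, x ∈ interior (s i) → DifferentiableAt ℝ f x := by
    rw [ae_ball_iff hTc]
    intro i hi
    filter_upwards [((hK i (hTΩ hi)).mono interior_subset).ae_differentiableWithinAt_of_mem]
      with x hx hxi
    exact (hx hxi).differentiableAt (isOpen_interior.mem_nhds hxi)
  filter_upwards [hT] with x hx hxΩ
  have hxU : x ∈ ⋃ i ∈ Ω, interior (s i) :=
    mem_biUnion hxΩ (mem_interior_iff_mem_nhds.2 (hs x hxΩ))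
  rw [← hTU] at hxU
  obtain ⟨i, hi, hxi⟩ := mem_iUnion₂.1 hxU
  exact hx i hi hxi

theorem norm_fderiv_comp_le_of_lipschitzWith {E F G : Type*} [NormedAddCommGroup E]
    [NormedSpace ℝ E] [NormedAddCommGroup F] [NormedSpace ℝ F] [NormedAddCommGroup G]
    [NormedSpace ℝ G] {φ : F → G} {K : ℝ≥0} (hφ : LipschitzWith K φ) {f : E → F} {x : E}
    (hf : DifferentiableAt ℝ f x) : ‖fderiv ℝ (φ ∘ f) x‖ ≤ K * ‖fderiv ℝ f x‖ := by
  by_cases hφf : DifferentiableAt ℝ (φ ∘ f) x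
  swap
  · rw [fderiv_zero_of_not_differentiableAt hφf, norm_zero]
    positivity
  refine ContinuousLinearMap.opNorm_le_bound _ (by positivity) fun v => ?_
  have hline : HasDerivAt (fun t : ℝ => x + t • v) v 0 := by
    simpa using ((hasDerivAt_id (0 : ℝ)).smul_const v).const_add x
  have hφf' := hφf.hasFDerivAt.comp_hasDerivAt_of_eq 0 hline (by simp)
  have hf' := hf.hasFDerivAt.comp_hasDerivAt_of_eq 0 hline (by simp)
  have hslope : ∀ t, ‖slope ((φ ∘ f) ∘ fun t : ℝ => x + t • v) 0 t‖
      ≤ K * ‖slope (f ∘ fun t : ℝ => x + t • v) 0 t‖ := by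
    intro t
    simp only [slope, vsub_eq_sub, norm_smul, Function.comp_apply, zero_smul, add_zero]
    rw [mul_left_comm]
    gcongr
    simpa [dist_eq_norm] using hφ.dist_le_mul (f (x + t • v)) (f x)
  calc ‖fderiv ℝ (φ ∘ f) x v‖ ≤ K * ‖fderiv ℝ f x v‖ :=
        le_of_tendsto_of_tendsto' (hasDerivAt_iff_tendsto_slope.1 hφf').norm
          ((hasDerivAt_iff_tendsto_slope.1 hf').norm.const_mul _) hslope
    _ ≤ K * (‖fderiv ℝ f x‖ * ‖v‖) := by gcongr; exact ContinuousLinearMap.le_opNorm _ _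
    _ = K * ‖fderiv ℝ f x‖ * ‖v‖ := by ring

theorem mul_measureReal_rpow_le_integral_rpow {α : Type*} [MeasurableSpace α] {μ : Measure α}
    [IsFiniteMeasure μ] {u : α → ℝ} {S : Set α} {δ p : ℝ} (hp : 0 < p) (hδ : 0 ≤ δ)
    (hu : Integrable (fun x => |u x| ^ p) μ) (hS : ∀ x ∈ S, δ ≤ |u x|) :
    δ * μ.real S ^ (1 / p) ≤ (∫ x, |u x| ^ p ∂μ) ^ (1 / p) := by
  have hmarkov := mul_meas_ge_le_integral_of_nonneg (ae_of_all _ fun x => by positivity) hu (δ ^ p)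
  have hSsub : S ⊆ {x | δ ^ p ≤ |u x| ^ p} := fun x hx => Real.rpow_le_rpow hδ (hS x hx) hp.le
  calc δ * μ.real S ^ (1 / p) = (δ ^ p * μ.real S) ^ (1 / p) := by
        rw [Real.mul_rpow (by positivity) measureReal_nonneg, one_div,
          Real.rpow_rpow_inv hδ hp.ne']
    _ ≤ (∫ x, |u x| ^ p ∂μ) ^ (1 / p) := by
        gcongr
        exact hmarkov.trans' (mul_le_mul_of_nonneg_left
          (measureReal_mono hSsub (measure_ne_top μ _)) (by positivity))

namespace MemW

variable {n : ℕ} {Ω : Set (Euc n)} {f : Euc n → ℝ}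

theorem continuousOn (hf : MemW Ω f) : ContinuousOn f Ω := fun x hx => by
  obtain ⟨s, hs, K, hK⟩ := hf.1 x hx
  exact (hK.continuousOn.continuousAt hs).continuousWithinAt

theorem comp_lipschitzWith (hf : MemW Ω f) (hΩ : MeasurableSet Ω) (hvol : volume Ω ≠ ∞)
    {φ : ℝ → ℝ} {K : ℝ≥0} (hφ : LipschitzWith K φ) : MemW Ω (φ ∘ f) := by
  have : IsFiniteMeasure (volume.restrict Ω) := isFiniteMeasure_restrict.2 hvol
  refine ⟨fun x hx => ?_, ?_, ?_⟩
  · obtain ⟨s, hs, L, hL⟩ := hf.1 x hx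
    exact ⟨s, hs, K * L, hφ.comp_lipschitzOnWith hL⟩
  · refine ((integrable_const |φ 0|).add (hf.2.1.norm.const_mul K)).mono'
      (hφ.continuous.comp_aestronglyMeasurable hf.2.1.aestronglyMeasurable)
      (ae_of_all _ fun x => ?_)
    have hdist := hφ.dist_le_mul (f x) 0
    rw [Real.dist_eq, Real.dist_eq, sub_zero] at hdist
    simp only [Pi.add_apply, Real.norm_eq_abs, Function.comp_apply]
    linarith [abs_sub_abs_le_abs_sub (φ (f x)) (φ 0)]
  · refine (hf.2.2.const_mul K).mono' (measurable_fderiv ℝ _).norm.aestronglyMeasurable ?_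
    filter_upwards [(ae_restrict_iff' hΩ).2
      (ae_differentiableAt_of_forall_lipschitzOnWith_nhds hf.1)] with x hx
    simp only [gradNorm, norm_norm]
    exact norm_fderiv_comp_le_of_lipschitzWith hφ hx

theorem integral_gradNorm_comp_le (hf : MemW Ω f) (hΩ : IsOpen Ω) {φ : ℝ → ℝ} {K : ℝ≥0}
    (hφ : LipschitzWith K φ) {T : Set ℝ} (hT : MeasurableSet T)
    (hφT : ∀ s ∉ T, ∀ᶠ y in 𝓝 s, φ y = φ s) :
    ∫ x in Ω, gradNorm (φ ∘ f) x ≤ K * ∫ x in Ω ∩ f ⁻¹' T, gradNorm f x := by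
  have hΩT := hf.continuousOn.measurableSet_inter_preimage hΩ.measurableSet hT
  have hbound : ∀ᵐ x ∂volume.restrict Ω,
      gradNorm (φ ∘ f) x ≤ (Ω ∩ f ⁻¹' T).indicator (fun x => K * gradNorm f x) x := by
    filter_upwards [(ae_restrict_iff' hΩ.measurableSet).2
      (ae_differentiableAt_of_forall_lipschitzOnWith_nhds hf.1),
      ae_restrict_mem hΩ.measurableSet] with x hdiff hx
    by_cases hxT : f x ∈ T
    · rw [indicator_of_mem (show x ∈ Ω ∩ f ⁻¹' T from ⟨hx, hxT⟩)]
      exact norm_fderiv_comp_le_of_lipschitzWith hφ hdiff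
    · have hconst : φ ∘ f =ᶠ[𝓝 x] fun _ => φ (f x) :=
        (hf.continuousOn.continuousAt (hΩ.mem_nhds hx)).eventually (hφT _ hxT)
      rw [gradNorm, hconst.fderiv_eq, fderiv_const_apply, norm_zero,
        indicator_of_notMem fun h => hxT h.2]
  calc ∫ x in Ω, gradNorm (φ ∘ f) x
      ≤ ∫ x in Ω, (Ω ∩ f ⁻¹' T).indicator (fun x => K * gradNorm f x) x :=
        integral_mono_of_nonneg (ae_of_all _ fun _ => norm_nonneg _)
          ((hf.2.2.const_mul K).indicator hΩT) hbound
    _ = K * ∫ x in Ω ∩ f ⁻¹' T, gradNorm f x := by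
        rw [setIntegral_indicator hΩT, inter_eq_right.2 inter_subset_left, integral_const_mul]

end MemW

namespace SPIneq

variable {n : ℕ} {Ω : Set (Euc n)} {p C₀ : ℝ}

theorem sub_div_two_mul_measure_rpow_le (hSP : SPIneq Ω p C₀) (hp : 0 < p)
    (hΩ : MeasurableSet Ω) (hvol : volume Ω = 1) {g : Euc n → ℝ} (hg : MemW Ω g) {a b : ℝ}
    (hab : a ≤ b) (hg_mem : ∀ x ∈ Ω, g x ∈ Icc a b) (hbot : 1 / 2 ≤ volume {x ∈ Ω | g x = a}) :
    (b - a) / 2 * (volume {x ∈ Ω | g x = b}).toReal ^ (1 / p)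
      ≤ C₀ * ∫ x in Ω, gradNorm g x := by
  have : IsProbabilityMeasure (volume.restrict Ω) := ⟨by rw [Measure.restrict_apply_univ, hvol]⟩
  have hg_mem' : ∀ᵐ x ∂volume.restrict Ω, g x ∈ Icc a b :=
    (ae_restrict_iff' hΩ).2 (ae_of_all _ hg_mem)
  -- Markov's inequality for `b - g`, which is at least `b - a` on a set of measure `≥ 1 / 2`.
  have hm : ∫ y in Ω, g y ≤ (a + b) / 2 := by
    have hmarkov := mul_meas_ge_le_integral_of_nonneg
      (hg_mem'.mono fun x hx => sub_nonneg.2 hx.2) ((integrable_const b).sub hg.2.1) (b - a)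
    have hhalf : 1 / 2 ≤ (volume.restrict Ω).real {x | b - a ≤ b - g x} := by
      have hsub : volume {x ∈ Ω | g x = a} ≤ volume.restrict Ω {x | b - a ≤ b - g x} :=
        (measure_mono (t := {x | b - a ≤ b - g x} ∩ Ω) fun x hx => ⟨by simp [hx.2], hx.1⟩).trans
          (Measure.le_restrict_apply _ _)
      simpa [measureReal_def] using ENNReal.toReal_mono (measure_ne_top _ _) (hbot.trans hsub)
    rw [integral_sub (integrable_const b) hg.2.1, integral_const, probReal_univ, one_smul]
      at hmarkov
    nlinarith [mul_le_mul_of_nonneg_left hhalf (sub_nonneg.2 hab)]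
  set m := ∫ y in Ω, g y
  have hdev : ∀ x ∈ {x ∈ Ω | g x = b}, (b - a) / 2 ≤ |g x - m| := fun x hx => by
    rw [hx.2]
    exact (by linarith : (b - a) / 2 ≤ b - m).trans (le_abs_self _)
  have hint : Integrable (fun x => |g x - m| ^ p) (volume.restrict Ω) := by
    refine .of_bound ((continuous_abs.rpow_const fun _ => Or.inr hp.le).comp_aestronglyMeasurable
      (hg.2.1.1.sub aestronglyMeasurable_const)) ((b - a + |a - m|) ^ p) ?_
    filter_upwards [hg_mem'] with x hx
    rw [Real.norm_eq_abs, abs_of_nonneg (by positivity)]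
    gcongr
    calc |g x - m| ≤ |g x - a| + |a - m| := abs_sub_le _ _ _
      _ ≤ b - a + |a - m| := by rw [abs_of_nonneg (sub_nonneg.2 hx.1)]; linarith [hx.2]
  calc (b - a) / 2 * (volume {x ∈ Ω | g x = b}).toReal ^ (1 / p)
      = (b - a) / 2 * (volume.restrict Ω).real {x ∈ Ω | g x = b} ^ (1 / p) := by
        rw [measureReal_def, Measure.restrict_eq_self _ (sep_subset _ _)]
    _ ≤ (∫ x in Ω, |g x - m| ^ p) ^ (1 / p) :=
        mul_measureReal_rpow_le_integral_rpow hp (by linarith) hint hdev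
    _ ≤ C₀ * ∫ x in Ω, gradNorm g x := hSP g hg

theorem sub_mul_measure_rpow_le (hSP : SPIneq Ω p C₀) (hp : 0 < p) (hC₀ : 0 ≤ C₀)
    (hΩ : IsOpen Ω) (hvol : volume Ω = 1) {u : Euc n → ℝ} (hu : MemW Ω u)
    (hmed : 1 / 2 ≤ volume {x ∈ Ω | u x ≤ 0}) {t₁ t₂ : ℝ} (ht₁ : 0 ≤ t₁) (ht : t₁ < t₂) :
    (t₂ - t₁) * (volume {x ∈ Ω | t₂ ≤ u x}).toReal ^ (1 / p)
      ≤ 2 * C₀ * ∫ x in {x ∈ Ω | t₁ < u x ∧ u x ≤ t₂}, gradNorm u x := by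
  -- Truncating at `t₁` itself would need `∇u = 0` a.e. on `{u = t₁}`; truncating at
  -- `t ∈ (t₁, t₂)` and letting `t → t₁` avoids this.
  refine le_of_forall_Ioo_sub_mul_le ht fun t ⟨ht₁t, htt₂⟩ => ?_
  set φ : ℝ → ℝ := fun s => max t (min t₂ s)
  have hφ : LipschitzWith 1 φ := (LipschitzWith.id.const_min t₂).const_max t
  have hφ_low : ∀ s ≤ t, φ s = t := fun s hs => max_eq_left ((min_le_right _ _).trans hs)
  have hφ_high : ∀ s, t₂ ≤ s → φ s = t₂ := fun s hs => by
    simp only [φ, min_eq_left hs, max_eq_right htt₂.le]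
  have hφ_const : ∀ s ∉ Icc t t₂, ∀ᶠ y in 𝓝 s, φ y = φ s := fun s hs => by
    rcases not_and_or.1 hs with hs | hs
    · filter_upwards [Iio_mem_nhds (not_le.1 hs)] with y hy
      rw [hφ_low y (le_of_lt hy), hφ_low s (not_le.1 hs).le]
    · filter_upwards [Ioi_mem_nhds (not_le.1 hs)] with y hy
      rw [hφ_high y (le_of_lt hy), hφ_high s (not_le.1 hs).le]
  have hvol' : volume Ω ≠ ∞ := by simp [hvol]
  have hlevel := hSP.sub_div_two_mul_measure_rpow_le hp hΩ.measurableSet hvol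
    (hu.comp_lipschitzWith hΩ.measurableSet hvol' hφ) htt₂.le
    (fun x _ => ⟨le_max_left _ _, max_le htt₂.le (min_le_left _ _)⟩)
    (hmed.trans (measure_mono fun x hx => ⟨hx.1, hφ_low _ (hx.2.trans (ht₁.trans ht₁t.le))⟩))
  have htop : (volume {x ∈ Ω | t₂ ≤ u x}).toReal ≤ (volume {x ∈ Ω | (φ ∘ u) x = t₂}).toReal :=
    ENNReal.toReal_mono (measure_ne_top_of_subset (sep_subset _ _) hvol')
      (measure_mono fun x hx => ⟨hx.1, hφ_high _ hx.2⟩)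
  have hgrad := hu.integral_gradNorm_comp_le hΩ hφ measurableSet_Icc hφ_const
  have hband : ∫ x in Ω ∩ u ⁻¹' Icc t t₂, gradNorm u x
      ≤ ∫ x in {x ∈ Ω | t₁ < u x ∧ u x ≤ t₂}, gradNorm u x :=
    setIntegral_mono_set (hu.2.2.mono_set (sep_subset _ _)) (ae_of_all _ fun _ => norm_nonneg _)
      (LE.le.eventuallyLE fun x hx => ⟨hx.1, ht₁t.trans_le hx.2.1, hx.2.2⟩)
  calc (t₂ - t) * (volume {x ∈ Ω | t₂ ≤ u x}).toReal ^ (1 / p)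
      ≤ 2 * ((t₂ - t) / 2 * (volume {x ∈ Ω | (φ ∘ u) x = t₂}).toReal ^ (1 / p)) := by
        rw [← mul_assoc, mul_div_cancel₀ _ two_ne_zero]
        gcongr
    _ ≤ 2 * (C₀ * ∫ x in Ω ∩ u ⁻¹' Icc t t₂, gradNorm u x) := by
        gcongr 2 * ?_
        simpa using hlevel.trans (mul_le_mul_of_nonneg_left hgrad hC₀)
    _ ≤ 2 * C₀ * ∫ x in {x ∈ Ω | t₁ < u x ∧ u x ≤ t₂}, gradNorm u x := by
        rw [← mul_assoc]
        exact mul_le_mul_of_nonneg_left hband (mul_nonneg zero_le_two hC₀)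

theorem sub_mul_measure_abs_rpow_le (hSP : SPIneq Ω p C₀) (hp : 1 ≤ p) (hC₀ : 0 ≤ C₀)
    (hΩ : IsOpen Ω) (hvol : volume Ω = 1) {u : Euc n → ℝ} (hu : MemW Ω u)
    (hmed : IsMedian Ω u 0) {t₁ t₂ : ℝ} (ht₁ : 0 ≤ t₁) (ht : t₁ < t₂) :
    (t₂ - t₁) * (volume {x ∈ Ω | t₂ ≤ |u x|}).toReal ^ (1 / p)
      ≤ 2 * C₀ * ∫ x in {x ∈ Ω | t₁ < |u x| ∧ |u x| ≤ t₂}, gradNorm u x := by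
  have hp₀ : 0 < p := zero_lt_one.trans_le hp
  have hvol' : volume Ω ≠ ∞ := by simp [hvol]
  have hup := hSP.sub_mul_measure_rpow_le hp₀ hC₀ hΩ hvol hu hmed.2 ht₁ ht
  have hu_neg : MemW Ω (fun x => -u x) :=
    hu.comp_lipschitzWith hΩ.measurableSet hvol' LipschitzWith.id.neg
  have hdown := hSP.sub_mul_measure_rpow_le hp₀ hC₀ hΩ hvol hu_neg
    (hmed.1.trans (measure_mono fun x hx => ⟨hx.1, neg_nonpos.2 hx.2⟩)) ht₁ ht
  have hgrad_neg : gradNorm (fun x => -u x) = gradNorm u :=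
    funext fun x => by rw [gradNorm, gradNorm, fderiv_fun_neg, norm_neg]
  rw [hgrad_neg] at hdown
  set Bu := {x ∈ Ω | t₁ < u x ∧ u x ≤ t₂}
  set Bd := {x ∈ Ω | t₁ < -u x ∧ -u x ≤ t₂}
  have hlevels : (volume {x ∈ Ω | t₂ ≤ |u x|}).toReal ^ (1 / p)
      ≤ (volume {x ∈ Ω | t₂ ≤ u x}).toReal ^ (1 / p)
        + (volume {x ∈ Ω | t₂ ≤ -u x}).toReal ^ (1 / p) := by
    refine (Real.rpow_le_rpow measureReal_nonneg ?_ (by positivity)).trans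
      (Real.rpow_add_le_add_rpow measureReal_nonneg measureReal_nonneg (by positivity)
        ((div_le_one hp₀).2 hp))
    refine (measureReal_mono (fun x hx => ?_)
      (measure_ne_top_of_subset (union_subset (sep_subset _ _) (sep_subset _ _)) hvol')).trans
      (measureReal_union_le _ _)
    rcases le_abs'.1 hx.2 with h | h
    · exact Or.inr ⟨hx.1, by linarith⟩
    · exact Or.inl ⟨hx.1, h⟩
  have hbands : (∫ x in Bu, gradNorm u x) + ∫ x in Bd, gradNorm u x
      ≤ ∫ x in {x ∈ Ω | t₁ < |u x| ∧ |u x| ≤ t₂}, gradNorm u x := by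
    have hBd : MeasurableSet Bd :=
      hu.continuousOn.neg.measurableSet_inter_preimage hΩ.measurableSet measurableSet_Ioc
    have hdisj : Disjoint Bu Bd :=
      disjoint_left.2 fun x hu hd => by linarith [hu.2.1, hd.2.1]
    rw [← setIntegral_union hdisj hBd (hu.2.2.mono_set (sep_subset _ _))
      (hu.2.2.mono_set (sep_subset _ _))]
    refine setIntegral_mono_set (hu.2.2.mono_set (sep_subset _ _))
      (ae_of_all _ fun _ => norm_nonneg _) (LE.le.eventuallyLE ?_)
    rintro x (⟨hx, h₁, h₂⟩ | ⟨hx, h₁, h₂⟩)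
    · exact ⟨hx, h₁.trans_le (le_abs_self _), abs_le.2 ⟨by linarith, h₂⟩⟩
    · exact ⟨hx, h₁.trans_le (neg_le_abs _), abs_le.2 ⟨by linarith, by linarith⟩⟩
  calc (t₂ - t₁) * (volume {x ∈ Ω | t₂ ≤ |u x|}).toReal ^ (1 / p)
      ≤ (t₂ - t₁) * (volume {x ∈ Ω | t₂ ≤ u x}).toReal ^ (1 / p)
        + (t₂ - t₁) * (volume {x ∈ Ω | t₂ ≤ -u x}).toReal ^ (1 / p) := by
        rw [← mul_add]
        exact mul_le_mul_of_nonneg_left hlevels (sub_nonneg.2 ht.le)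
    _ ≤ 2 * C₀ * ((∫ x in Bu, gradNorm u x) + ∫ x in Bd, gradNorm u x) := by
        rw [mul_add]
        exact add_le_add hup hdown
    _ ≤ 2 * C₀ * ∫ x in {x ∈ Ω | t₁ < |u x| ∧ |u x| ≤ t₂}, gradNorm u x :=
        mul_le_mul_of_nonneg_left hbands (mul_nonneg zero_le_two hC₀)

end SPIneq

/-- If `Ω` satisfies the `p`-Sobolev–Poincaré inequality with constant `C₀`
(`1 ≤ p ≤ n/(n−1)`), then there is `C = C(p, C₀)` such that for every
`f ∈ W(Ω)`, every median `r` of `f` and all `0 < t₁ < t₂`: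
`(t₂ − t₁)·|{|f − r| ≥ t₂}|^{1/p} ≤ C ∫_{t₁ < |f − r| ≤ t₂} |∇f|`. -/
theorem stmt1 (p C₀ : ℝ) (hp : 1 ≤ p) (hC₀ : 0 < C₀) :
    ∃ C : ℝ, 0 < C ∧ ∀ n : ℕ, 2 ≤ n → ∀ Ω : Set (Euc n),
      IsOpen Ω → IsConnected Ω → volume Ω = 1 → p ≤ (n : ℝ) / ((n : ℝ) - 1) →
      SPIneq Ω p C₀ →
      ∀ f : Euc n → ℝ, MemW Ω f → ∀ r : ℝ, IsMedian Ω f r →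
      ∀ t₁ t₂ : ℝ, 0 < t₁ → t₁ < t₂ →
        (t₂ - t₁) * (volume {x ∈ Ω | t₂ ≤ |f x - r|}).toReal ^ (1 / p)
          ≤ C * ∫ x in {x ∈ Ω | t₁ < |f x - r| ∧ |f x - r| ≤ t₂}, gradNorm f x := by
  refine ⟨2 * C₀, by positivity, ?_⟩
  intro n _ Ω hΩ _ hvol _ hSP f hf r hmed t₁ t₂ ht₁ ht
  have hu : MemW Ω (fun x => f x - r) := hf.comp_lipschitzWith hΩ.measurableSet (by simp [hvol])
    (IsometryEquiv.subRight r).isometry.lipschitz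
  have hmed' : IsMedian Ω (fun x => f x - r) 0 :=
    ⟨hmed.1.trans (measure_mono fun x hx => ⟨hx.1, sub_nonneg.2 hx.2⟩),
      hmed.2.trans (measure_mono fun x hx => ⟨hx.1, sub_nonpos.2 hx.2⟩)⟩
  have hgrad : gradNorm (fun x => f x - r) = gradNorm f :=
    funext fun x => by rw [gradNorm, gradNorm, fderiv_sub_const]
  simpa only [hgrad] using hSP.sub_mul_measure_abs_rpow_le hp hC₀.le hΩ hvol hu hmed' ht₁.le ht
end
end

section
/- Let g, h : (0, ∞) → [0, ∞) be Lebesgue measurable and suppose there are constants C₁, C₂ > 0 such that g(s) ≤ C₁ h**(s) for all s > 0 and ∫₀^t g(s) ds ≤ C₂ ∫₀^t h*(s) ds for all t > 0. Then there is a constant c depending only on C₁ and C₂ such that ∫₀^t g*(s) ds ≤ c ∫₀^t h*(s) ds for all t > 0. -/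
open MeasureTheory Set
open scoped ENNReal NNReal

noncomputable section

/-!
Fix `t > 0` and put `A = ∫₀ᵗ h*`. Since `h*` is decreasing, so is its running average `h**`;
hence `g ≤ C₁ h**(t) = C₁ A / t =: a` on `(t, ∞)`. By the layer-cake formula,
`∫₀ᵗ g* = ∫₀^∞ min(t, μ{g > λ}) dλ`. The levels `λ ≤ a` contribute at most `a t`, and a level
`λ > a` only sees the part of `{g > λ}` inside `(0, t]`, so those levels contribute at most
`∫₀ᵗ g ≤ C₂ A`. Together `∫₀ᵗ g* ≤ (C₁ + C₂) A`.
-/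

open Filter Topology

section Rearrangement

variable {α : Type*} [MeasurableSpace α] {μ : Measure α} {u : α → ℝ} {a l t : ℝ}

def distribFun (μ : Measure α) (u : α → ℝ) (l : ℝ) : ℝ≥0∞ := μ {x | l < |u x|}

lemma distribFun_antitone : Antitone (distribFun μ u) :=
  fun _ _ hl => measure_mono fun _ hx => lt_of_le_of_lt hl hx

lemma decRearr_nonneg (μ : Measure α) (u : α → ℝ) (t : ℝ) : 0 ≤ decRearr μ u t :=
  Real.sInf_nonneg fun _ hl => hl.1

lemma decRearr_eq_zero_of_forall_distribFun_eq_top (h : ∀ l, distribFun μ u l = ∞) (t : ℝ) :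
    decRearr μ u t = 0 := by
  have : {l : ℝ | 0 ≤ l ∧ distribFun μ u l ≤ ENNReal.ofReal t} = ∅ := by
    simp [h]
  exact (congrArg sInf this).trans Real.sInf_empty

lemma tendsto_distribFun_atTop (hu : Measurable u) (hfin : ∃ l₀, distribFun μ u l₀ ≠ ∞) :
    Tendsto (distribFun μ u) atTop (𝓝 0) := by
  have hempty : (⋂ l : ℝ, {x | l < |u x|}) = ∅ :=
    eq_empty_of_forall_notMem fun x hx => lt_irrefl |u x| (mem_iInter.1 hx |u x|)
  have h := tendsto_measure_iInter_atTop (μ := μ)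
    (fun l => (measurableSet_lt measurable_const hu.abs).nullMeasurableSet)
    (fun _ _ hl _ hx => lt_of_le_of_lt hl hx) hfin
  rwa [hempty, measure_empty] at h

lemma exists_distribFun_le_ofReal (hu : Measurable u) (hfin : ∃ l₀, distribFun μ u l₀ ≠ ∞)
    (ht : 0 < t) : ∃ l, 0 ≤ l ∧ distribFun μ u l ≤ ENNReal.ofReal t :=
  (((tendsto_distribFun_atTop hu hfin).eventually_lt_const (ENNReal.ofReal_pos.2 ht)).and
    (eventually_ge_atTop 0)).exists.imp fun _ hl => ⟨hl.2, hl.1.le⟩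

lemma distribFun_le_of_forall_gt {m : ℝ≥0∞} (h : ∀ l' > l, distribFun μ u l' ≤ m) :
    distribFun μ u l ≤ m := by
  have hunion : (⋃ n : ℕ, {x | l + 1 / (n + 1) < |u x|}) = {x | l < |u x|} := by
    ext x
    simp only [mem_iUnion, mem_ofPred_eq]
    refine ⟨fun ⟨n, hn⟩ => lt_trans (lt_add_of_pos_right l Nat.one_div_pos_of_nat) hn,
      fun hx => ?_⟩
    obtain ⟨n, hn⟩ := exists_nat_one_div_lt (sub_pos.2 hx)
    exact ⟨n, by linarith⟩
  have hmono : Monotone fun n : ℕ => {x | l + 1 / ((n : ℝ) + 1) < |u x|} := fun m n hmn x hx =>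
    lt_of_le_of_lt (add_le_add_right (Nat.one_div_le_one_div hmn) l) hx
  refine le_of_tendsto' (hunion ▸ tendsto_measure_iUnion_atTop hmono) fun n => h _ ?_
  exact lt_add_of_pos_right l Nat.one_div_pos_of_nat

lemma decRearr_le_iff (hu : Measurable u) (hfin : ∃ l₀, distribFun μ u l₀ ≠ ∞) (ht : 0 < t)
    (hl : 0 ≤ l) : decRearr μ u t ≤ l ↔ distribFun μ u l ≤ ENNReal.ofReal t := by
  refine ⟨fun hle => distribFun_le_of_forall_gt fun l' hl' => ?_,
    fun hD => csInf_le ⟨0, fun _ hm => hm.1⟩ ⟨hl, hD⟩⟩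
  obtain ⟨m, hm, hml'⟩ :=
    exists_lt_of_csInf_lt (exists_distribFun_le_ofReal hu hfin ht) (hle.trans_lt hl')
  exact (distribFun_antitone hml'.le).trans hm.2

lemma decRearr_antitoneOn (hu : Measurable u) : AntitoneOn (decRearr μ u) (Ioi 0) := by
  intro s hs s' _ hss'
  by_cases hfin : ∃ l₀, distribFun μ u l₀ ≠ ∞
  · have hself := (decRearr_le_iff hu hfin hs (decRearr_nonneg μ u s)).1 le_rfl
    exact (decRearr_le_iff hu hfin (lt_of_lt_of_le hs hss') (decRearr_nonneg μ u s)).2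
      (hself.trans (ENNReal.ofReal_le_ofReal hss'))
  · push Not at hfin
    simp [decRearr_eq_zero_of_forall_distribFun_eq_top hfin]

lemma volume_setOf_mem_Ioc_ofReal_lt (t : ℝ) (m : ℝ≥0∞) :
    volume {s | s ∈ Ioc 0 t ∧ ENNReal.ofReal s < m} = min (ENNReal.ofReal t) m := by
  rcases eq_or_ne m ∞ with rfl | hm
  · simp only [ENNReal.ofReal_lt_top, and_true, ofPred_mem_eq, min_top_right, Real.volume_Ioc,
      sub_zero]
  obtain ⟨d, rfl⟩ : ∃ d, m = ENNReal.ofReal d := ⟨m.toReal, (ENNReal.ofReal_toReal hm).symm⟩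
  have hset : {s | s ∈ Ioc 0 t ∧ ENNReal.ofReal s < ENNReal.ofReal d} = Ioc 0 t ∩ Iio d := by
    ext s
    simp only [mem_ofPred_eq, mem_inter_iff, mem_Iio, ENNReal.ofReal_lt_ofReal_iff',
      and_congr_right_iff, and_iff_left_iff_imp]
    exact fun hs hsd => hs.1.trans hsd
  rw [hset, ← ENNReal.ofReal_min]
  refine le_antisymm ?_ ?_
  · calc volume (Ioc 0 t ∩ Iio d) ≤ volume (Ioc 0 (min t d)) :=
          measure_mono fun s hs => ⟨hs.1.1, le_min hs.1.2 (le_of_lt hs.2)⟩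
      _ = _ := by rw [Real.volume_Ioc, sub_zero]
  · calc ENNReal.ofReal (min t d) = volume (Ioo 0 (min t d)) := by rw [Real.volume_Ioo, sub_zero]
      _ ≤ volume (Ioc 0 t ∩ Iio d) := measure_mono fun s hs =>
          ⟨⟨hs.1, (lt_min_iff.1 hs.2).1.le⟩, (lt_min_iff.1 hs.2).2⟩

lemma volume_setOf_lt_decRearr_inter_Ioc (hu : Measurable u)
    (hfin : ∃ l₀, distribFun μ u l₀ ≠ ∞) (hl : 0 ≤ l) (t : ℝ) :
    volume ({s | l < decRearr μ u s} ∩ Ioc 0 t) = min (ENNReal.ofReal t) (distribFun μ u l) := by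
  rw [← volume_setOf_mem_Ioc_ofReal_lt]
  congr 1
  ext s
  simp only [mem_inter_iff, mem_ofPred_eq, and_comm (a := s ∈ Ioc 0 t), and_congr_left_iff]
  intro hs
  rw [← not_le, decRearr_le_iff hu hfin hs.1 hl, not_le]

lemma lintegral_decRearr_Ioc (hu : Measurable u) (hfin : ∃ l₀, distribFun μ u l₀ ≠ ∞) (t : ℝ) :
    ∫⁻ s in Ioc 0 t, ENNReal.ofReal (decRearr μ u s)
      = ∫⁻ l in Ioi 0, min (ENNReal.ofReal t) (distribFun μ u l) := by
  rw [lintegral_eq_lintegral_meas_lt _ (ae_of_all _ (decRearr_nonneg μ u))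
    (aemeasurable_restrict_of_antitoneOn measurableSet_Ioc
      ((decRearr_antitoneOn hu).mono Ioc_subset_Ioi_self))]
  refine setLIntegral_congr_fun measurableSet_Ioi fun l hl => ?_
  rw [Measure.restrict_apply' measurableSet_Ioc,
    volume_setOf_lt_decRearr_inter_Ioc hu hfin (le_of_lt hl)]

lemma distribFun_le_restrict_apply {E : Set α} (hE : ∀ᵐ x ∂μ, x ∉ E → |u x| ≤ a) (hal : a ≤ l) :
    distribFun μ u l ≤ μ.restrict E {x | l < |u x|} := by
  refine le_trans (measure_mono_ae ?_) (Measure.le_restrict_apply E _)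
  filter_upwards [hE] with x hx hlx
  exact ⟨hlx, by_contra fun hxE => (hx hxE).not_gt (hal.trans_lt hlx)⟩

lemma setLIntegral_ofReal_abs_le_lintegral_decRearr (hu : Measurable u)
    (hfin : ∃ l₀, distribFun μ u l₀ ≠ ∞) {E : Set α} (hEt : μ E ≤ ENNReal.ofReal t) :
    ∫⁻ x in E, ENNReal.ofReal |u x| ∂μ ≤ ∫⁻ s in Ioc 0 t, ENNReal.ofReal (decRearr μ u s) := by
  rw [lintegral_eq_lintegral_meas_lt _ (ae_of_all _ fun x => abs_nonneg (u x))
    hu.abs.aemeasurable, lintegral_decRearr_Ioc hu hfin]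
  refine setLIntegral_mono' measurableSet_Ioi fun l _ => le_min ?_ (Measure.restrict_apply_le _ _)
  exact (measure_mono (subset_univ _)).trans (by rwa [Measure.restrict_apply_univ])

lemma lintegral_decRearr_Ioc_le (hu : Measurable u) {E : Set α} (ha : 0 ≤ a)
    (hE : ∀ᵐ x ∂μ, x ∉ E → |u x| ≤ a) (t : ℝ) :
    ∫⁻ s in Ioc 0 t, ENNReal.ofReal (decRearr μ u s)
      ≤ ENNReal.ofReal (a * t) + ∫⁻ x in E, ENNReal.ofReal |u x| ∂μ := by
  by_cases hfin : ∃ l₀, distribFun μ u l₀ ≠ ∞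
  swap
  · push Not at hfin
    simp [decRearr_eq_zero_of_forall_distribFun_eq_top hfin]
  rw [lintegral_decRearr_Ioc hu hfin, ← Ioc_union_Ioi_eq_Ioi ha,
    lintegral_union measurableSet_Ioi (Ioc_disjoint_Ioi le_rfl)]
  gcongr ?_ + ?_
  · calc ∫⁻ l in Ioc 0 a, min (ENNReal.ofReal t) (distribFun μ u l)
        ≤ ∫⁻ l in Ioc 0 a, ENNReal.ofReal t :=
          setLIntegral_mono' measurableSet_Ioc fun _ _ => min_le_left _ _
      _ = ENNReal.ofReal (a * t) := by
          rw [setLIntegral_const, Real.volume_Ioc, sub_zero, ENNReal.ofReal_mul ha, mul_comm]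
  · rw [lintegral_eq_lintegral_meas_lt (μ.restrict E) (ae_of_all _ fun x => abs_nonneg (u x))
      hu.abs.aemeasurable.restrict]
    calc ∫⁻ l in Ioi a, min (ENNReal.ofReal t) (distribFun μ u l)
        ≤ ∫⁻ l in Ioi a, μ.restrict E {x | l < |u x|} :=
          setLIntegral_mono' measurableSet_Ioi fun l hl =>
            (min_le_right _ _).trans (distribFun_le_restrict_apply hE (le_of_lt hl))
      _ ≤ ∫⁻ l in Ioi 0, μ.restrict E {x | l < |u x|} := lintegral_mono_set (Ioi_subset_Ioi ha)

lemma integral_decRearr_Ioc_le (hu : Measurable u) {E : Set α} (ha : 0 ≤ a)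
    (hE : ∀ᵐ x ∂μ, x ∉ E → |u x| ≤ a) (ht : 0 ≤ t) (hEt : μ E ≤ ENNReal.ofReal t) :
    ∫ s in Ioc 0 t, decRearr μ u s ≤ a * t + ∫ x in E, |u x| ∂μ := by
  have hfin : ∃ l₀, distribFun μ u l₀ ≠ ∞ := by
    refine ⟨a, ne_top_of_le_ne_top (ENNReal.ofReal_ne_top (r := t)) ?_⟩
    calc distribFun μ u a ≤ μ.restrict E univ :=
          (distribFun_le_restrict_apply hE le_rfl).trans (measure_mono (subset_univ _))
      _ ≤ ENNReal.ofReal t := by rwa [Measure.restrict_apply_univ]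
  have habs : 0 ≤ᵐ[μ.restrict E] fun x => |u x| := ae_of_all _ fun x => abs_nonneg (u x)
  rw [integral_eq_lintegral_of_nonneg_ae (ae_of_all _ (decRearr_nonneg μ u))
    (aemeasurable_restrict_of_antitoneOn measurableSet_Ioc
      ((decRearr_antitoneOn hu).mono Ioc_subset_Ioi_self)).aestronglyMeasurable]
  by_cases hint : IntegrableOn (fun x => |u x|) E μ
  · refine ENNReal.toReal_le_of_le_ofReal (by positivity [integral_nonneg_of_ae habs]) ?_
    rw [ENNReal.ofReal_add (mul_nonneg ha ht) (integral_nonneg_of_ae habs),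
      ofReal_integral_eq_lintegral_ofReal hint habs]
    exact lintegral_decRearr_Ioc_le hu ha hE t
  · -- Then `u*` is not integrable on `(0, t]` either, so both Bochner integrals are the junk value `0`.
    have hinf : ∫⁻ x in E, ENNReal.ofReal |u x| ∂μ = ∞ := by
      by_contra hne
      exact hint ((lintegral_ofReal_ne_top_iff_integrable
        hu.abs.aestronglyMeasurable.restrict habs).1 hne)
    have hL := setLIntegral_ofReal_abs_le_lintegral_decRearr hu hfin hEt
    rw [hinf, top_le_iff] at hL
    rw [hL, ENNReal.toReal_top]
    exact add_nonneg (mul_nonneg ha ht) (integral_nonneg_of_ae habs)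

end Rearrangement

lemma AntitoneOn.antitoneOn_one_div_mul_integral_Ioc {f : ℝ → ℝ} (hf : AntitoneOn f (Ioi 0)) :
    AntitoneOn (fun x => 1 / x * ∫ s in Ioc 0 x, f s) (Ioi 0) := by
  intro t ht x hx htx
  simp only
  by_cases hint : IntegrableOn f (Ioc 0 t)
  swap
  · have hint_x : ¬IntegrableOn f (Ioc 0 x) := fun h =>
      hint (h.mono_set (Ioc_subset_Ioc_right htx))
    rw [integral_undef hint, integral_undef hint_x]
    simp
  have hint' : IntegrableOn f (Ioc t x) :=
    ((hf.mono fun s hs => lt_of_lt_of_le ht hs.1).integrableOn_isCompact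
      isCompact_Icc).mono_set Ioc_subset_Icc_self
  have hsplit : ∫ s in Ioc 0 x, f s = (∫ s in Ioc 0 t, f s) + ∫ s in Ioc t x, f s := by
    rw [← setIntegral_union (Ioc_disjoint_Ioc_of_le le_rfl) measurableSet_Ioc hint hint',
      Ioc_union_Ioc_eq_Ioc (le_of_lt ht) htx]
  have htail : ∫ s in Ioc t x, f s ≤ (x - t) * f t := by
    have := setIntegral_mono_on hint' (integrableOn_const (by simp)) measurableSet_Ioc
      fun s hs => hf ht (lt_trans ht hs.1) (le_of_lt hs.1)
    simpa [Real.volume_real_Ioc_of_le htx] using this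
  have hhead : t * f t ≤ ∫ s in Ioc 0 t, f s := by
    have := setIntegral_mono_on (integrableOn_const (by simp)) hint measurableSet_Ioc
      fun s hs => hf hs.1 ht hs.2
    simpa [Real.volume_real_Ioc_of_le (le_of_lt ht)] using this
  rw [hsplit, one_div_mul_eq_div, one_div_mul_eq_div, div_le_div_iff₀ hx ht]
  nlinarith [mul_le_mul_of_nonneg_left htail (le_of_lt ht),
    mul_le_mul_of_nonneg_left hhead (sub_nonneg.2 htx)]

lemma decRearrAvg_antitoneOn {α : Type*} [MeasurableSpace α] {μ : Measure α} {u : α → ℝ}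
    (hu : Measurable u) : AntitoneOn (decRearrAvg μ u) (Ioi 0) :=
  (decRearr_antitoneOn hu).antitoneOn_one_div_mul_integral_Ioc

/-- Let `g, h : (0,∞) → [0,∞)` be measurable with `g ≤ C₁ h**` pointwise on
`(0,∞)` and `∫₀ᵗ g ≤ C₂ ∫₀ᵗ h*` for all `t > 0`. Then there is `c = c(C₁, C₂)`
with `∫₀ᵗ g* ≤ c ∫₀ᵗ h*` for all `t > 0`. Rearrangements are taken with respect
to Lebesgue measure on `(0,∞)`. -/
theorem stmt7 (C₁ C₂ : ℝ) (hC₁ : 0 < C₁) (hC₂ : 0 < C₂) :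
    ∃ c : ℝ, 0 < c ∧ ∀ g h : ℝ → ℝ, Measurable g → Measurable h →
      (∀ s ∈ Ioi (0 : ℝ), 0 ≤ g s) → (∀ s ∈ Ioi (0 : ℝ), 0 ≤ h s) →
      (∀ s ∈ Ioi (0 : ℝ), g s ≤ C₁ * decRearrAvg (volume.restrict (Ioi (0 : ℝ))) h s) →
      (∀ t ∈ Ioi (0 : ℝ), (∫ s in Ioc (0 : ℝ) t, g s)
          ≤ C₂ * ∫ s in Ioc (0 : ℝ) t, decRearr (volume.restrict (Ioi (0 : ℝ))) h s) →
      ∀ t ∈ Ioi (0 : ℝ),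
        (∫ s in Ioc (0 : ℝ) t, decRearr (volume.restrict (Ioi (0 : ℝ))) g s)
          ≤ c * ∫ s in Ioc (0 : ℝ) t, decRearr (volume.restrict (Ioi (0 : ℝ))) h s := by
  refine ⟨C₁ + C₂, by positivity, fun g h hg hh hg0 _ hgh hgH t (ht : 0 < t) => ?_⟩
  set μ₀ := volume.restrict (Ioi (0 : ℝ))
  set A := ∫ s in Ioc 0 t, decRearr μ₀ h s
  have hA : 0 ≤ A := setIntegral_nonneg measurableSet_Ioc fun s _ => decRearr_nonneg μ₀ h s
  have hg_tail : ∀ᵐ x ∂μ₀, x ∉ Ioc 0 t → |g x| ≤ C₁ * A / t := by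
    refine (ae_restrict_iff' measurableSet_Ioi).2 (ae_of_all _ fun x (hx : 0 < x) hxt => ?_)
    have htx : t ≤ x := le_of_lt (not_le.1 fun h => hxt ⟨hx, h⟩)
    calc |g x| = g x := abs_of_nonneg (hg0 x hx)
      _ ≤ C₁ * decRearrAvg μ₀ h x := hgh x hx
      _ ≤ C₁ * decRearrAvg μ₀ h t :=
          mul_le_mul_of_nonneg_left (decRearrAvg_antitoneOn hh ht hx htx) hC₁.le
      _ = C₁ * A / t := by rw [decRearrAvg]; ring
  have hg_int : ∫ x in Ioc 0 t, |g x| ∂μ₀ = ∫ x in Ioc 0 t, g x := by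
    rw [Measure.restrict_restrict measurableSet_Ioc, Ioc_inter_Ioi, max_self]
    exact setIntegral_congr_fun measurableSet_Ioc fun x hx => abs_of_nonneg (hg0 x hx.1)
  have hμt : μ₀ (Ioc 0 t) ≤ ENNReal.ofReal t := by
    rw [Measure.restrict_apply measurableSet_Ioc, Ioc_inter_Ioi, max_self, Real.volume_Ioc,
      sub_zero]
  have hbound := integral_decRearr_Ioc_le hg (by positivity) hg_tail ht.le hμt
  rw [hg_int, div_mul_cancel₀ _ ht.ne'] at hbound
  linarith [hgH t ht]
end
end

section
/- Let n ≥ 1, let γₙ denote the Lebesgue measure of the unit ball of ℝⁿ, and let B be the open ball of ℝⁿ centered at 0 with |B| = 1 (radius γₙ^{−1/n}). Let g : (0,1] → [0, ∞) be continuous, and define u : B → [0, ∞] by u(x) = ∫_{γₙ|x|ⁿ}^1 g(s) s^{1/n − 1} ds. Then: (a) the decreasing rearrangement of u satisfies u*(t) = ∫_t^1 s^{1/n} g(s) (ds/s) for every t ∈ (0,1); (b) u is differentiable at every x ∈ B ∖ {0} with |∇u(x)| = n γₙ^{1/n} g(γₙ|x|ⁿ). -/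
/-!
Write `φ(x) = γₙ|x|ⁿ` and `F(a) = ∫ₐ¹ g(s) s^{1/n-1} ds`, so that `u = F ∘ φ`. On `B` the
function `φ` is uniformly distributed on `(0, 1)`, because `{φ < a}` is a ball of volume `a`, and
`F` is nonincreasing and continuous there. Hence `{u > F(t)}` is, up to a null set, the ball
`{φ < t}` of volume `t`, while `{u > l}` has volume `> t` for every `l < F(t)`; so `u* = F`.
For (b), `u` is radial and `|∇u(x)|` is the absolute value of the derivative of `r ↦ F(γₙrⁿ)` at
`r = |x|`, namely `g(γₙ|x|ⁿ) (γₙ|x|ⁿ)^{1/n-1} · nγₙ|x|ⁿ⁻¹ = nγₙ^{1/n} g(γₙ|x|ⁿ)`.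
-/

open MeasureTheory Set
open scoped ENNReal NNReal

noncomputable section

/-- The measure `γₙ` of the unit ball of `ℝⁿ`. -/
def unitBallVol (n : ℕ) : ℝ := (volume (Metric.ball (0 : Euc n) 1)).toReal

open Filter Topology

section Rearrangement

variable {α : Type*} [MeasurableSpace α] {μ : Measure α}

theorem decRearr_eq_of_forall_lt {u : α → ℝ} {t c : ℝ} (hc : 0 ≤ c)
    (hle : μ {x | c < |u x|} ≤ ENNReal.ofReal t)
    (hlt : ∀ l, 0 ≤ l → l < c → ENNReal.ofReal t < μ {x | l < |u x|}) :
    decRearr μ u t = c := by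
  have hc_mem : c ∈ {l : ℝ | 0 ≤ l ∧ μ {x | l < |u x|} ≤ ENNReal.ofReal t} := ⟨hc, hle⟩
  refine le_antisymm (csInf_le ⟨0, fun l hl => hl.1⟩ hc_mem) (le_csInf ⟨c, hc_mem⟩ ?_)
  rintro l ⟨hl0, hlμ⟩
  exact not_lt.1 fun hlc => (hlt l hl0 hlc).not_ge hlμ

theorem decRearr_comp_eq_of_uniform {φ : α → ℝ} {F : ℝ → ℝ} {t : ℝ}
    (hφ : ∀ a ∈ Ioo (0 : ℝ) 1, μ {x | φ x < a} = ENNReal.ofReal a)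
    (hφ_mem : ∀ᵐ x ∂μ, φ x ∈ Ioo (0 : ℝ) 1)
    (hF : AntitoneOn F (Ioo 0 1)) (hF_nonneg : ∀ s ∈ Ioo (0 : ℝ) 1, 0 ≤ F s)
    (hFt : ContinuousWithinAt F (Ioi t) t) (ht : t ∈ Ioo (0 : ℝ) 1) :
    decRearr μ (F ∘ φ) t = F t := by
  refine decRearr_eq_of_forall_lt (hF_nonneg t ht) ?_ fun l _ hl => ?_
  · calc μ {x | F t < |F (φ x)|} ≤ μ {x | φ x < t} := by
          refine measure_mono_ae (hφ_mem.mono fun x hx (hlt : F t < |F (φ x)|) => ?_)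
          rw [abs_of_nonneg (hF_nonneg _ hx)] at hlt
          by_contra hge
          exact (hF ht hx (not_lt.1 hge)).not_gt hlt
      _ = ENNReal.ofReal t := hφ t ht
  · obtain ⟨t', hlt', htt'⟩ :=
      ((hFt.eventually_const_lt hl).and (Ioo_mem_nhdsGT ht.2)).exists
    have ht' : t' ∈ Ioo (0 : ℝ) 1 := ⟨ht.1.trans htt'.1, htt'.2⟩
    calc ENNReal.ofReal t < ENNReal.ofReal t' :=
          (ENNReal.ofReal_lt_ofReal_iff ht'.1).2 htt'.1
      _ = μ {x | φ x < t'} := (hφ t' ht').symm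
      _ ≤ μ {x | l < |F (φ x)|} :=
          measure_mono_ae (hφ_mem.mono fun x hx hxt =>
            hlt'.trans_le ((hF hx ht' (le_of_lt hxt)).trans (le_abs_self _)))

end Rearrangement

section IntegralFromLeft

variable {f : ℝ → ℝ} {a b : ℝ}

theorem hasDerivAt_setIntegral_Ioc_left (hf : ContinuousOn f (Ioc a b)) {t : ℝ}
    (ht : t ∈ Ioo a b) : HasDerivAt (fun s => ∫ x in Ioc s b, f x) (-f t) t := by
  have hnhds : Ioc a b ∈ 𝓝 t := mem_of_superset (Ioo_mem_nhds ht.1 ht.2) Ioo_subset_Ioc_self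
  have hint : IntervalIntegrable f volume t b :=
    (hf.mono (Icc_subset_Ioc ht.1 le_rfl)).intervalIntegrable_of_Icc ht.2.le
  refine (intervalIntegral.integral_hasDerivAt_left hint
      ⟨Ioc a b, hnhds, hf.aestronglyMeasurable measurableSet_Ioc⟩
      (hf.continuousAt hnhds)).congr_of_eventuallyEq ?_
  filter_upwards [Iio_mem_nhds ht.2] with s hs
  exact (intervalIntegral.integral_of_le hs.le).symm

theorem antitoneOn_setIntegral_Ioc_left (hf : ContinuousOn f (Ioc a b))
    (hf_nonneg : ∀ x ∈ Ioc a b, 0 ≤ f x) :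
    AntitoneOn (fun s => ∫ x in Ioc s b, f x) (Ioo a b) := by
  have hderiv (t : ℝ) (ht : t ∈ Ioo a b) := hasDerivAt_setIntegral_Ioc_left hf ht
  refine antitoneOn_of_hasDerivWithinAt_nonpos (f' := fun t => -f t) (convex_Ioo a b)
    (fun t ht => (hderiv t ht).continuousAt.continuousWithinAt) (fun t ht => ?_)
    (fun t ht => ?_)
  · rw [interior_Ioo] at ht ⊢
    exact (hderiv t ht).hasDerivWithinAt
  · rw [interior_Ioo] at ht
    exact neg_nonpos.2 (hf_nonneg t (Ioo_subset_Ioc_self ht))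

end IntegralFromLeft

theorem HasDerivAt.norm_fderiv_comp_norm {E : Type*} [NormedAddCommGroup E]
    [InnerProductSpace ℝ E] {h : ℝ → ℝ} {h' : ℝ} {x : E} (hx : x ≠ 0)
    (hh : HasDerivAt h h' ‖x‖) :
    DifferentiableAt ℝ (fun y => h ‖y‖) x ∧ ‖fderiv ℝ (fun y => h ‖y‖) x‖ = |h'| := by
  have : Nontrivial E := nontrivial_of_ne x 0 hx
  have hnorm : DifferentiableAt ℝ (‖·‖) x := differentiableAt_id.norm ℝ hx
  have hcomp : HasFDerivAt (fun y => h ‖y‖) (h' • fderiv ℝ (‖·‖) x) x :=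
    hh.comp_hasFDerivAt x hnorm.hasFDerivAt
  refine ⟨hcomp.differentiableAt, ?_⟩
  rw [hcomp.fderiv, norm_smul, norm_fderiv_norm hnorm, mul_one, Real.norm_eq_abs]

theorem rpow_one_div_sub_one_mul_pow_pred {γ r : ℝ} {n : ℕ} (hγ : 0 < γ) (hr : 0 < r)
    (hn : n ≠ 0) :
    (γ * r ^ n) ^ ((1 : ℝ) / n - 1) * (γ * (n * r ^ (n - 1))) = n * γ ^ ((1 : ℝ) / n) := by
  obtain ⟨m, rfl⟩ : ∃ m, n = m + 1 := ⟨n - 1, by omega⟩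
  rw [Real.rpow_sub_one (by positivity), Real.mul_rpow hγ.le (by positivity), one_div,
    Real.pow_rpow_inv_natCast hr.le hn, Nat.add_sub_cancel, pow_succ]
  field_simp

section UnitBall

variable {n : ℕ}

theorem nontrivial_euc (hn : n ≠ 0) : Nontrivial (Euc n) :=
  Module.nontrivial_of_finrank_pos (R := ℝ) (by rw [finrank_euclideanSpace_fin]; omega)

theorem unitBallVol_pos (n : ℕ) : 0 < unitBallVol n :=
  ENNReal.toReal_pos (Metric.measure_ball_pos volume _ one_pos).ne' measure_ball_lt_top.ne

theorem volume_ball_zero_euc (hn : n ≠ 0) {r : ℝ} (hr : 0 ≤ r) :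
    volume (Metric.ball (0 : Euc n) r) = ENNReal.ofReal (unitBallVol n * r ^ n) := by
  have := nontrivial_euc hn
  rw [Measure.addHaar_ball volume 0 hr, finrank_euclideanSpace_fin, mul_comm (unitBallVol n),
    ENNReal.ofReal_mul (by positivity), unitBallVol, ENNReal.ofReal_toReal measure_ball_lt_top.ne]

theorem setOf_unitBallVol_mul_norm_pow_lt (hn : n ≠ 0) {a : ℝ} (ha : 0 ≤ a) :
    {x : Euc n | unitBallVol n * ‖x‖ ^ n < a}
      = Metric.ball 0 ((a / unitBallVol n) ^ (n⁻¹ : ℝ)) := by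
  have hγ := unitBallVol_pos n
  ext x
  rw [mem_ofPred_eq, mem_ball_zero_iff, Real.lt_rpow_inv_iff_of_pos (norm_nonneg _)
    (div_nonneg ha hγ.le) (by positivity), Real.rpow_natCast, lt_div_iff₀' hγ]

theorem ball_unitBallVol_rpow_eq (hn : n ≠ 0) :
    Metric.ball (0 : Euc n) (unitBallVol n ^ (-(1 : ℝ) / n))
      = {x | unitBallVol n * ‖x‖ ^ n < 1} := by
  rw [setOf_unitBallVol_mul_norm_pow_lt hn zero_le_one, neg_div, one_div,
    Real.rpow_neg (unitBallVol_pos n).le, ← Real.inv_rpow (unitBallVol_pos n).le, one_div]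

theorem volume_setOf_unitBallVol_mul_norm_pow_lt (hn : n ≠ 0) {a : ℝ} (ha : 0 ≤ a) :
    volume {x : Euc n | unitBallVol n * ‖x‖ ^ n < a} = ENNReal.ofReal a := by
  have hγ := unitBallVol_pos n
  rw [setOf_unitBallVol_mul_norm_pow_lt hn ha, volume_ball_zero_euc hn (by positivity),
    ← Real.rpow_natCast, ← Real.rpow_mul (div_nonneg ha hγ.le),
    inv_mul_cancel₀ (Nat.cast_ne_zero.2 hn), Real.rpow_one, mul_div_cancel₀ _ hγ.ne']


theorem volume_restrict_setOf_unitBallVol_mul_norm_pow_lt (hn : n ≠ 0) {a : ℝ}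
    (ha : a ∈ Ioo (0 : ℝ) 1) :
    (volume.restrict {x : Euc n | unitBallVol n * ‖x‖ ^ n < 1})
      {x | unitBallVol n * ‖x‖ ^ n < a} = ENNReal.ofReal a := by
  rw [Measure.restrict_apply' (measurableSet_lt (by fun_prop) measurable_const),
    inter_eq_left.2 (ofPred_subset_ofPred.2 fun x hx => hx.trans ha.2),
    volume_setOf_unitBallVol_mul_norm_pow_lt hn ha.1.le]

theorem ae_restrict_unitBallVol_mul_norm_pow_mem_Ioo (hn : n ≠ 0) :
    ∀ᵐ x ∂(volume.restrict {x : Euc n | unitBallVol n * ‖x‖ ^ n < 1}),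
      unitBallVol n * ‖x‖ ^ n ∈ Ioo (0 : ℝ) 1 := by
  have := nontrivial_euc hn
  have hγ := unitBallVol_pos n
  rw [ae_restrict_iff' (measurableSet_lt (by fun_prop) measurable_const)]
  filter_upwards [compl_mem_ae_iff.2 (measure_singleton (0 : Euc n))] with x hx0 hx1
  have : 0 < ‖x‖ := norm_pos_iff.2 hx0
  exact ⟨by positivity, hx1⟩

theorem decRearr_setIntegral_Ioc_unitBallVol_mul_norm_pow (hn : n ≠ 0) {f : ℝ → ℝ}
    (hf : ContinuousOn f (Ioc 0 1)) (hf_nonneg : ∀ s ∈ Ioc (0 : ℝ) 1, 0 ≤ f s) {t : ℝ}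
    (ht : t ∈ Ioo (0 : ℝ) 1) :
    decRearr (volume.restrict {x : Euc n | unitBallVol n * ‖x‖ ^ n < 1})
      (fun x => ∫ s in Ioc (unitBallVol n * ‖x‖ ^ n) 1, f s) t = ∫ s in Ioc t 1, f s :=
  decRearr_comp_eq_of_uniform
    (fun _ ha => volume_restrict_setOf_unitBallVol_mul_norm_pow_lt hn ha)
    (ae_restrict_unitBallVol_mul_norm_pow_mem_Ioo hn)
    (antitoneOn_setIntegral_Ioc_left hf hf_nonneg)
    (fun _ hs => setIntegral_nonneg measurableSet_Ioc fun r hr =>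
      hf_nonneg r ⟨hs.1.trans hr.1, hr.2⟩)
    (hasDerivAt_setIntegral_Ioc_left hf ht).continuousAt.continuousWithinAt ht

theorem norm_fderiv_setIntegral_Ioc_unitBallVol_mul_norm_pow {f : ℝ → ℝ}
    (hf : ContinuousOn f (Ioc 0 1)) (hf_nonneg : ∀ s ∈ Ioc (0 : ℝ) 1, 0 ≤ f s) {x : Euc n}
    (hx0 : x ≠ 0) (hx : unitBallVol n * ‖x‖ ^ n < 1) :
    DifferentiableAt ℝ (fun y => ∫ s in Ioc (unitBallVol n * ‖y‖ ^ n) 1, f s) x ∧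
      ‖fderiv ℝ (fun y => ∫ s in Ioc (unitBallVol n * ‖y‖ ^ n) 1, f s) x‖
        = f (unitBallVol n * ‖x‖ ^ n) * (unitBallVol n * (n * ‖x‖ ^ (n - 1))) := by
  have hγ := unitBallVol_pos n
  have hs : unitBallVol n * ‖x‖ ^ n ∈ Ioo (0 : ℝ) 1 :=
    ⟨by positivity [norm_pos_iff.2 hx0], hx⟩
  obtain ⟨hdiff, hnorm⟩ := HasDerivAt.norm_fderiv_comp_norm hx0
    ((hasDerivAt_setIntegral_Ioc_left hf hs).comp ‖x‖
      ((hasDerivAt_pow n ‖x‖).const_mul (unitBallVol n)))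
  refine ⟨hdiff, hnorm.trans ?_⟩
  rw [abs_mul, abs_neg, abs_of_nonneg (hf_nonneg _ (Ioo_subset_Ioc_self hs)),
    abs_of_nonneg (by positivity)]

end UnitBall

/-- Let `B` be the ball of `ℝⁿ` centered at `0` with `|B| = 1` (radius
`γₙ^{−1/n}`), let `g : (0,1] → [0,∞)` be continuous, and
`u(x) = ∫_{γₙ|x|ⁿ}¹ g(s) s^{1/n−1} ds`. Then (a) the decreasing rearrangement of
`u` on `B` is `u*(t) = ∫ₜ¹ s^{1/n} g(s) ds/s` for `t ∈ (0,1)`, and (b) `u` is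
differentiable on `B ∖ {0}` with `|∇u(x)| = n γₙ^{1/n} g(γₙ|x|ⁿ)`. -/
theorem stmt13 (n : ℕ) (hn : 1 ≤ n)
    (g : ℝ → ℝ) (hg : ContinuousOn g (Ioc (0 : ℝ) 1))
    (hg0 : ∀ s ∈ Ioc (0 : ℝ) 1, 0 ≤ g s)
    (u : Euc n → ℝ)
    (hu : ∀ x : Euc n,
      u x = ∫ s in Ioc (unitBallVol n * ‖x‖ ^ n) 1, g s * s ^ ((1 : ℝ) / n - 1)) :
    (∀ t ∈ Ioo (0 : ℝ) 1,
        decRearr (volume.restrict (Metric.ball (0 : Euc n) (unitBallVol n ^ (-(1 : ℝ) / n)))) u t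
          = ∫ s in Ioc t 1, s ^ ((1 : ℝ) / n) * g s / s) ∧
    (∀ x : Euc n, x ∈ Metric.ball (0 : Euc n) (unitBallVol n ^ (-(1 : ℝ) / n)) → x ≠ 0 →
        DifferentiableAt ℝ u x ∧
          ‖fderiv ℝ u x‖ = n * unitBallVol n ^ ((1 : ℝ) / n) * g (unitBallVol n * ‖x‖ ^ n)) := by
  have hn0 : n ≠ 0 := by omega
  have hf : ContinuousOn (fun s => g s * s ^ ((1 : ℝ) / n - 1)) (Ioc 0 1) :=
    hg.mul (continuousOn_id.rpow_const fun s hs => Or.inl hs.1.ne')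
  have hf_nonneg : ∀ s ∈ Ioc (0 : ℝ) 1, 0 ≤ g s * s ^ ((1 : ℝ) / n - 1) := fun s hs =>
    mul_nonneg (hg0 s hs) (Real.rpow_nonneg hs.1.le _)
  obtain rfl : u = _ := funext hu
  rw [ball_unitBallVol_rpow_eq hn0]
  refine ⟨fun t ht => ?_, fun x hx hx0 => ?_⟩
  · rw [decRearr_setIntegral_Ioc_unitBallVol_mul_norm_pow hn0 hf hf_nonneg ht]
    refine setIntegral_congr_fun measurableSet_Ioc fun s hs => ?_
    rw [Real.rpow_sub_one (ht.1.trans hs.1).ne']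
    ring
  · obtain ⟨hdiff, hnorm⟩ :=
      norm_fderiv_setIntegral_Ioc_unitBallVol_mul_norm_pow hf hf_nonneg hx0 hx
    refine ⟨hdiff, hnorm.trans ?_⟩
    rw [mul_assoc, rpow_one_div_sub_one_mul_pow_pred (unitBallVol_pos n)
      (norm_pos_iff.2 hx0) hn0]
    ring
end
end

section
/- Let n ≥ 2, let 1 < s < n/(n−1), let t > 1 satisfy s > (t−1)/(n−1), and set r = nt / ((n−1)s + 1 − t). Then 1 < t < r, and there is NO constant c > 0 such that ( ∫₀^1 ( ∫_x^1 u^{−(n−1)s/n} g(u) du )^r dx )^{1/r} ≤ c ( ∫₀^1 g(u)^t du )^{1/t} holds for all measurable g : (0,1) → [0, ∞). Equivalently, the Hardy-type operator Hg(x) = ∫_x^1 u^{−(n−1)s/n} g(u) du is not bounded from L^t(0,1) to L^r(0,1). -/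
/-!
Test the inequality on `g = 𝟙_(ε, 2ε]`. The right-hand side is `c ε^{1/t}`, while `Hg` is
antitone and equals `∫_ε^{2ε} u^a du ≥ 2^a ε^{1+a}` on `(0, ε]`, so the left-hand side is at
least `2^a ε^{1/r + 1 + a}` (here `a = -(n-1)s/n`). The exponent gap
`1/r + 1 + a - 1/t = -(t-1)(n-1)(s-1)/(nt)` is negative, so the ratio of the two sides
blows up as `ε → 0`.
-/

open MeasureTheory Set
open scoped ENNReal NNReal

noncomputable section

open Filter Topology Real

def hardyOp (a : ℝ) (g : ℝ → ℝ) (x : ℝ) : ℝ := ∫ u in Ioc x 1, u ^ a * g u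

section Exponents

variable {N s t : ℝ}

lemma lt_hardy_exponent (hN : 1 < N) (hs : s < N / (N - 1)) (ht : 1 < t)
    (hst : (t - 1) / (N - 1) < s) : t < N * t / ((N - 1) * s + 1 - t) := by
  have hN1 : 0 < N - 1 := by linarith
  have hsN : s * (N - 1) < N := (lt_div_iff₀ hN1).mp hs
  have hts : t - 1 < s * (N - 1) := (div_lt_iff₀ hN1).mp hst
  rw [lt_div_iff₀ (by linarith)]
  nlinarith

lemma hardy_exponent_gap_neg (hN : 1 < N) (hs : 1 < s) (ht : 1 < t) :
    1 / (N * t / ((N - 1) * s + 1 - t)) + 1 + -(N - 1) * s / N - 1 / t < 0 := by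
  have hgap : 1 / (N * t / ((N - 1) * s + 1 - t)) + 1 + -(N - 1) * s / N - 1 / t
      = -((t - 1) * (N - 1) * (s - 1)) / (N * t) := by
    rw [one_div_div]
    field_simp
    ring
  rw [hgap]
  have : 0 < (t - 1) * (N - 1) * (s - 1) := by
    have := sub_pos.mpr ht; have := sub_pos.mpr hN; have := sub_pos.mpr hs; positivity
  exact div_neg_of_neg_of_pos (neg_neg_of_pos this) (by positivity)

end Exponents

lemma exists_lt_rpow_of_neg {e : ℝ} (he : e < 0) (K : ℝ) {δ : ℝ} (hδ : 0 < δ) :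
    ∃ ε ∈ Ioo 0 δ, K < ε ^ e :=
  (((tendsto_rpow_neg_nhdsGT_zero he).eventually_gt_atTop K).and (Ioo_mem_nhdsGT hδ)).exists
    |>.imp fun _ h => ⟨h.2, h.1⟩

lemma setIntegral_indicator_one_rpow {α : Type*} [MeasurableSpace α] {μ : Measure α}
    {S T : Set α} (hS : MeasurableSet S) (hST : S ⊆ T) {t : ℝ} (ht : t ≠ 0) :
    ∫ x in T, S.indicator 1 x ^ t ∂μ = μ.real S := by
  have hpow : (fun x => S.indicator (1 : α → ℝ) x ^ t) = S.indicator 1 := by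
    funext x
    by_cases hx : x ∈ S <;> simp [hx, zero_rpow ht]
  rw [hpow, setIntegral_indicator hS, inter_eq_self_of_subset_right hST, Pi.one_def,
    setIntegral_const, smul_eq_mul, mul_one]

lemma integrableOn_rpow_Ioc {a b c : ℝ} (hb : 0 < b) : IntegrableOn (fun u => u ^ a) (Ioc b c) :=
  (ContinuousOn.integrableOn_Icc fun u hu =>
    (continuousAt_rpow_const u a (Or.inl (hb.trans_le hu.1).ne')).continuousWithinAt).mono_set
    Ioc_subset_Icc_self

lemma sub_mul_rpow_le_setIntegral_rpow {a b c : ℝ} (ha : a ≤ 0) (hb : 0 < b) (hbc : b ≤ c) :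
    (c - b) * c ^ a ≤ ∫ u in Ioc b c, u ^ a := by
  have := setIntegral_ge_of_const_le (μ := volume) (s := Ioc b c) measurableSet_Ioc
    measure_Ioc_lt_top.ne
    (fun u hu => rpow_le_rpow_of_nonpos (hb.trans hu.1) hu.2 ha) (integrableOn_rpow_Ioc hb)
  rwa [Real.volume_real_Ioc_of_le hbc, smul_eq_mul] at this

section HardyOp

variable {a : ℝ} {g : ℝ → ℝ}

lemma hardyOp_nonneg (hg : ∀ u, 0 ≤ u ^ a * g u) (x : ℝ) : 0 ≤ hardyOp a g x :=
  setIntegral_nonneg measurableSet_Ioc fun u _ => hg u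

lemma hardyOp_antitone (hint : Integrable fun u => u ^ a * g u) (hg : ∀ u, 0 ≤ u ^ a * g u) :
    Antitone (hardyOp a g) := fun _ _ hxy =>
  setIntegral_mono_set hint.integrableOn (ae_of_all _ hg)
    (Ioc_subset_Ioc_left hxy).eventuallyLE

lemma rpow_mul_indicator_Ioc (b c u : ℝ) :
    u ^ a * (Ioc b c).indicator 1 u = (Ioc b c).indicator (fun u => u ^ a) u := by
  by_cases hu : u ∈ Ioc b c <;> simp [hu]

lemma hardyOp_indicator_Ioc_of_le {b c x : ℝ} (hc : c ≤ 1) (hx : x ≤ b) :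
    hardyOp a ((Ioc b c).indicator 1) x = ∫ u in Ioc b c, u ^ a := by
  simp only [hardyOp, rpow_mul_indicator_Ioc]
  rw [setIntegral_indicator measurableSet_Ioc,
    inter_eq_self_of_subset_right (Ioc_subset_Ioc hx hc)]

end HardyOp

lemma rpow_mul_le_setIntegral_rpow_of_antitone {F : ℝ → ℝ} (hF : Antitone F)
    (hF0 : ∀ x, 0 ≤ F x) {ε r : ℝ} (hε : 0 < ε) (hε1 : ε ≤ 1) (hr : 0 < r) :
    ε ^ (1 / r) * F ε ≤ (∫ x in Ioo 0 1, F x ^ r) ^ (1 / r) := by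
  have hmeas : Measurable fun x => F x ^ r :=
    (continuous_rpow_const hr.le).measurable.comp hF.measurable
  have hint : IntegrableOn (fun x => F x ^ r) (Ioo 0 1) := by
    refine Measure.integrableOn_of_bounded (M := F 0 ^ r) measure_Ioo_lt_top.ne
      hmeas.aestronglyMeasurable (ae_restrict_of_forall_mem measurableSet_Ioo fun x hx => ?_)
    rw [norm_of_nonneg (rpow_nonneg (hF0 x) r)]
    exact rpow_le_rpow (hF0 x) (hF hx.1.le) hr.le
  have hlow : ε * F ε ^ r ≤ ∫ x in Ioo 0 1, F x ^ r :=
    calc ε * F ε ^ r = volume.real (Ioo 0 ε) • F ε ^ r := by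
          rw [Real.volume_real_Ioo_of_le hε.le, sub_zero, smul_eq_mul]
      _ ≤ ∫ x in Ioo 0 ε, F x ^ r :=
          setIntegral_ge_of_const_le measurableSet_Ioo measure_Ioo_lt_top.ne
            (fun x hx => rpow_le_rpow (hF0 ε) (hF hx.2.le) hr.le)
            (hint.mono_set (Ioo_subset_Ioo_right hε1))
      _ ≤ ∫ x in Ioo 0 1, F x ^ r :=
          setIntegral_mono_set hint (ae_of_all _ fun x => rpow_nonneg (hF0 x) r)
            (Ioo_subset_Ioo_right hε1).eventuallyLE
  calc ε ^ (1 / r) * F ε = (ε * F ε ^ r) ^ (1 / r) := by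
        rw [mul_rpow hε.le (rpow_nonneg (hF0 ε) r), ← rpow_mul (hF0 ε),
          mul_one_div_cancel hr.ne', rpow_one]
    _ ≤ _ := rpow_le_rpow (by have := hF0 ε; positivity) hlow (by positivity)

lemma rpow_le_norm_hardyOp_indicator {a r ε : ℝ} (ha : a ≤ 0) (hr : 0 < r) (hε : 0 < ε)
    (hε1 : 2 * ε ≤ 1) :
    2 ^ a * ε ^ (1 / r + 1 + a) ≤
      (∫ x in Ioo 0 1, hardyOp a ((Ioc ε (2 * ε)).indicator 1) x ^ r) ^ (1 / r) := by
  have hint : Integrable fun u => u ^ a * (Ioc ε (2 * ε)).indicator 1 u := by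
    simp only [rpow_mul_indicator_Ioc]
    exact (integrableOn_rpow_Ioc hε).integrable_indicator measurableSet_Ioc
  have hnn : ∀ u, 0 ≤ u ^ a * (Ioc ε (2 * ε)).indicator 1 u := fun u => by
    rw [rpow_mul_indicator_Ioc]
    exact indicator_nonneg (fun v hv => rpow_nonneg (hε.trans hv.1).le a) u
  calc 2 ^ a * ε ^ (1 / r + 1 + a) = ε ^ (1 / r) * ((2 * ε - ε) * (2 * ε) ^ a) := by
        rw [mul_rpow zero_le_two hε.le, rpow_add hε, rpow_add hε, rpow_one]
        ring
    _ ≤ ε ^ (1 / r) * hardyOp a ((Ioc ε (2 * ε)).indicator 1) ε := by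
        rw [hardyOp_indicator_Ioc_of_le hε1 le_rfl]
        gcongr
        exact sub_mul_rpow_le_setIntegral_rpow ha hε (by linarith)
    _ ≤ _ := rpow_mul_le_setIntegral_rpow_of_antitone (hardyOp_antitone hint hnn)
        (hardyOp_nonneg hnn) hε (by linarith) hr

/-- Let `n ≥ 2`, `1 < s < n/(n−1)`, `t > 1` with `s > (t−1)/(n−1)`, and
`r = nt/((n−1)s + 1 − t)`. Then `1 < t < r`, and the Hardy-type operator
`Hg(x) = ∫ₓ¹ u^{−(n−1)s/n} g(u) du` is NOT bounded from `L^t(0,1)` to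
`L^r(0,1)`. -/
theorem stmt15 (n : ℕ) (hn : 2 ≤ n) (s t : ℝ) (hs1 : 1 < s)
    (hs2 : s < (n : ℝ) / ((n : ℝ) - 1)) (ht : 1 < t)
    (hst : (t - 1) / ((n : ℝ) - 1) < s) :
    ∀ r : ℝ, r = (n : ℝ) * t / (((n : ℝ) - 1) * s + 1 - t) →
      (1 < t ∧ t < r) ∧
      ¬ ∃ c : ℝ, 0 < c ∧ ∀ g : ℝ → ℝ, Measurable g → (∀ u ∈ Ioo (0 : ℝ) 1, 0 ≤ g u) →
          (∫ x in Ioo (0 : ℝ) 1,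
              (∫ u in Ioc x 1, u ^ (-((n : ℝ) - 1) * s / n) * g u) ^ r) ^ (1 / r)
            ≤ c * (∫ u in Ioo (0 : ℝ) 1, g u ^ t) ^ (1 / t) := by
  intro r hr
  have hN : (1 : ℝ) < n := by exact_mod_cast hn
  have htr : t < r := hr ▸ lt_hardy_exponent hN hs2 ht hst
  refine ⟨⟨ht, htr⟩, ?_⟩
  rintro ⟨c, -, hbound⟩
  set a := -((n : ℝ) - 1) * s / n
  have ha : a ≤ 0 := div_nonpos_of_nonpos_of_nonneg (by nlinarith) (by positivity)
  have hgap : 1 / r + 1 + a - 1 / t < 0 := hr ▸ hardy_exponent_gap_neg hN hs1 ht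
  obtain ⟨ε, ⟨hε, hε2⟩, hbig⟩ := exists_lt_rpow_of_neg hgap (c / 2 ^ a) one_half_pos
  have key := (rpow_le_norm_hardyOp_indicator ha (by linarith) hε (by linarith)).trans
    (hbound _ (measurable_const.indicator measurableSet_Ioc) fun u _ =>
      indicator_nonneg (fun _ _ => zero_le_one) u)
  have hsub : Ioc ε (2 * ε) ⊆ Ioo 0 1 := fun u hu =>
    ⟨hε.trans hu.1, hu.2.trans_lt (by linarith)⟩
  have hrhs : ∫ u in Ioo (0 : ℝ) 1, (Ioc ε (2 * ε)).indicator 1 u ^ t = ε := by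
    rw [setIntegral_indicator_one_rpow measurableSet_Ioc hsub (by linarith),
      Real.volume_real_Ioc_of_le (by linarith)]
    ring
  rw [hrhs, show 1 / r + 1 + a = (1 / r + 1 + a - 1 / t) + 1 / t by ring, rpow_add hε,
    ← mul_assoc] at key
  have hsmall : 2 ^ a * ε ^ (1 / r + 1 + a - 1 / t) ≤ c :=
    le_of_mul_le_mul_right key (rpow_pos_of_pos hε _)
  rw [div_lt_iff₀ (by positivity)] at hbig
  linarith
end
end
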